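/- (Weighted cocoercivity-type inequality for curvature-bounded functions.) Let L > 0 and μ < L, and let f ∈ F_{μ,L}. Then for all x, y ∈ H and all subgradients g_x ∈ ∂f(x) and g_y ∈ ∂f(y): ⟨g_x − g_y, x − y⟩ ≥ (1/L)·‖g_x − g_y‖² + (μ/(L(L − μ)))·‖g_x − g_y − L(x − y)‖². -/

import Mathlib

open RealInnerProductSpace

variable {H : Type*} [NormedAddCommGroup H] [InnerProductSpace ℝ H]

/-- `f` has lower curvature `μ`, i.e. `f - (μ/2)‖·‖²` is convex. -/
def HasLowerCurvature (μ : ℝ) (f : H → ℝ) : Prop :=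
  ConvexOn ℝ Set.univ fun x => f x - μ / 2 * ‖x‖ ^ 2

/-- `f` has upper curvature `L`, i.e. `(L/2)‖·‖² - f` is convex. -/
def HasUpperCurvature (L : ℝ) (f : H → ℝ) : Prop :=
  ConvexOn ℝ Set.univ fun x => L / 2 * ‖x‖ ^ 2 - f x

/-- `g` is a subgradient of `f` (of lower curvature `μ`) at `x`. -/
def IsSubgradient (μ : ℝ) (f : H → ℝ) (x g : H) : Prop :=
  ∀ y, f y ≥ f x + ⟪g, y - x⟫ + μ / 2 * ‖y - x‖ ^ 2

/-! Since `(L/2)‖·‖² - f` is convex and, by the subgradient inequality at `x`, lies below a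
quadratic touching it at `x`, its affine minorant at `x` is a tangent; this is the descent bound
`f z ≤ f x + ⟪g_x, z - x⟫ + (L/2)‖z - x‖²`. Write `a = x - y`, `b = g_x - g_y` and
`d = b - L a`. Squeezing `f` at `y - d / (L - μ)` between the descent bound at `x` and the
subgradient bound at `y` gives `f y ≤ f x - ⟪g_x, a⟫ + (L/2)‖a‖² - ‖d‖² / (2(L - μ))`. Adding the
same inequality with `x` and `y` exchanged leaves `⟪b, a⟫ + ‖d‖² / (L - μ) ≤ L‖a‖²`, and
eliminating `‖a‖²` through `‖d‖² = ‖b‖² - 2L⟪b, a⟫ + L²‖a‖²` gives the claim. -/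

theorem le_of_forall_pos_le_add_mul {a b c : ℝ} (h : ∀ s > 0, a ≤ b + s * c) : a ≤ b := by
  have hlim : Filter.Tendsto (fun s : ℝ => b + s * c) (nhdsWithin 0 (Set.Ioi 0)) (nhds b) := by
    have : Continuous fun s : ℝ => b + s * c := by fun_prop
    simpa using (this.tendsto 0).mono_left nhdsWithin_le_nhds
  exact ge_of_tendsto hlim (eventually_nhdsWithin_of_forall h)

theorem ConvexOn.add_inner_le_of_le_add_sq {φ : H → ℝ} (hφ : ConvexOn ℝ Set.univ φ) {x v : H}
    {C : ℝ} (h : ∀ z, φ z ≤ φ x + ⟪v, z - x⟫ + C * ‖z - x‖ ^ 2) (z : H) :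
    φ x + ⟪v, z - x⟫ ≤ φ z := by
  refine le_of_forall_pos_le_add_mul (c := C * ‖z - x‖ ^ 2) fun s hs => ?_
  -- `x` divides the segment from `w` to `z` in the ratio `s : 1`
  set w := x + s • (x - z)
  have hs1 : 0 < 1 + s := by linarith
  have hx : (1 / (1 + s)) • w + (s / (1 + s)) • z = x := by
    simp only [w]
    match_scalars <;> field_simp; ring
  have hconv := hφ.2 (Set.mem_univ w) (Set.mem_univ z) (by positivity) (by positivity)
    (by field_simp : 1 / (1 + s) + s / (1 + s) = 1)
  rw [hx, smul_eq_mul, smul_eq_mul] at hconv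
  have hconv' : (1 + s) * φ x ≤ φ w + s * φ z := by
    rw [← le_div_iff₀' hs1]
    linarith [show 1 / (1 + s) * φ w + s / (1 + s) * φ z = (φ w + s * φ z) / (1 + s) by ring]
  have hφw := h w
  rw [show w - x = (-s) • (z - x) by simp only [w]; module, inner_smul_right, norm_smul, mul_pow,
    Real.norm_eq_abs, sq_abs] at hφw
  have : s * (φ x + ⟪v, z - x⟫) ≤ s * (φ z + s * (C * ‖z - x‖ ^ 2)) := by linarith
  exact le_of_mul_le_mul_left this hs

theorem HasUpperCurvature.le_add_inner_add_sq {L μ : ℝ} {f : H → ℝ} (hf : HasUpperCurvature L f)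
    {x g : H} (hg : IsSubgradient μ f x g) (z : H) :
    f z ≤ f x + ⟪g, z - x⟫ + L / 2 * ‖z - x‖ ^ 2 := by
  have hnorm : ∀ z : H, ‖z‖ ^ 2 = ‖x‖ ^ 2 + 2 * ⟪x, z - x⟫ + ‖z - x‖ ^ 2 := fun z => by
    rw [← norm_add_sq_real, add_sub_cancel]
  have hquad (z : H) : L / 2 * ‖z‖ ^ 2 - f z ≤
      (L / 2 * ‖x‖ ^ 2 - f x) + ⟪L • x - g, z - x⟫ + (L - μ) / 2 * ‖z - x‖ ^ 2 := by
    rw [inner_sub_left, real_inner_smul_left, hnorm z]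
    linarith [hg z]
  have htangent := hf.add_inner_le_of_le_add_sq hquad z
  rw [inner_sub_left, real_inner_smul_left, hnorm z] at htangent
  linarith

theorem HasUpperCurvature.le_add_inner_add_sq_sub {L μ : ℝ} (hμL : μ ≠ L) {f : H → ℝ}
    (hf : HasUpperCurvature L f) {x y gx gy : H} (hgx : IsSubgradient μ f x gx)
    (hgy : IsSubgradient μ f y gy) :
    f y ≤ f x + ⟪gx, y - x⟫ + L / 2 * ‖y - x‖ ^ 2 -
      ‖gx - gy - L • (x - y)‖ ^ 2 / (2 * (L - μ)) := by
  set d := gx - gy - L • (x - y)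
  set k := (L - μ)⁻¹
  have hd : ⟪gx - gy, d⟫ + L * ⟪y - x, d⟫ = ‖d‖ ^ 2 := by
    rw [← real_inner_self_eq_norm_sq, ← real_inner_smul_left, ← inner_add_left]
    congr 1
    simp only [d]
    module
  have hlower := hgy (y - k • d)
  have hupper := hf.le_add_inner_add_sq hgx (y - k • d)
  rw [show y - k • d - y = -(k • d) by abel, inner_neg_right, norm_neg, real_inner_smul_right,
    norm_smul, mul_pow, Real.norm_eq_abs, sq_abs] at hlower
  rw [show y - k • d - x = (y - x) - k • d by abel, inner_sub_right, norm_sub_sq_real,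
    real_inner_smul_right, real_inner_smul_right, norm_smul, mul_pow, Real.norm_eq_abs,
    sq_abs] at hupper
  have hLμ : L - μ ≠ 0 := sub_ne_zero.2 hμL.symm
  have hk : ‖d‖ ^ 2 / (2 * (L - μ)) =
      k * (⟪gx - gy, d⟫ + L * ⟪y - x, d⟫) - (L - μ) / 2 * k ^ 2 * ‖d‖ ^ 2 := by
    rw [hd]
    simp only [k]
    field_simp
    ring
  rw [hk, inner_sub_left]
  linarith

theorem curvature_cocoercivity_general
    (L mu : ℝ) (hL : 0 < L) (hmuL : mu < L)
    (f : H → ℝ) (hup : HasUpperCurvature L f)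
    (x y gx gy : H)
    (hgx : IsSubgradient mu f x gx) (hgy : IsSubgradient mu f y gy) :
    ⟪gx - gy, x - y⟫ ≥
      (1 / L) * ‖gx - gy‖ ^ 2 +
      mu / (L * (L - mu)) * ‖gx - gy - L • (x - y)‖ ^ 2 := by
  have hxy := hup.le_add_inner_add_sq_sub hmuL.ne hgx hgy
  have hyx := hup.le_add_inner_add_sq_sub hmuL.ne hgy hgx
  rw [← neg_sub x y, inner_neg_right, norm_neg] at hxy
  rw [show gy - gx - L • (y - x) = -(gx - gy - L • (x - y)) by module, norm_neg] at hyx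
  set d := gx - gy - L • (x - y)
  have hd : ‖d‖ ^ 2 = ‖gx - gy‖ ^ 2 - 2 * L * ⟪gx - gy, x - y⟫ + L ^ 2 * ‖x - y‖ ^ 2 := by
    rw [norm_sub_sq_real, real_inner_smul_right, norm_smul, mul_pow, Real.norm_eq_abs, sq_abs]
    ring
  have hsum : ⟪gx - gy, x - y⟫ + ‖d‖ ^ 2 / (L - mu) ≤ L * ‖x - y‖ ^ 2 := by
    rw [inner_sub_left]
    linarith [show ‖d‖ ^ 2 / (2 * (L - mu)) = ‖d‖ ^ 2 / (L - mu) / 2 by rw [div_div, mul_comm 2]]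
  have hLmu : L - mu ≠ 0 := sub_ne_zero.2 hmuL.ne'
  have hkey : ‖gx - gy‖ ^ 2 + mu * (‖d‖ ^ 2 / (L - mu)) ≤ L * ⟪gx - gy, x - y⟫ := by
    have : L * (‖d‖ ^ 2 / (L - mu)) = ‖d‖ ^ 2 + mu * (‖d‖ ^ 2 / (L - mu)) := by
      field_simp
      ring
    linarith [mul_le_mul_of_nonneg_left hsum hL.le]
  calc (1 / L) * ‖gx - gy‖ ^ 2 + mu / (L * (L - mu)) * ‖d‖ ^ 2
      = (‖gx - gy‖ ^ 2 + mu * (‖d‖ ^ 2 / (L - mu))) / L := by field_simp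
    _ ≤ L * ⟪gx - gy, x - y⟫ / L := by gcongr
    _ = ⟪gx - gy, x - y⟫ := by field_simp

/-- weighted cocoercivity-type inequality. -/
theorem curvature_cocoercivity
    (L mu : ℝ) (hL : 0 < L) (hmuL : mu < L)
    (f : H → ℝ) (hlo : HasLowerCurvature mu f) (hup : HasUpperCurvature L f)
    (x y gx gy : H)
    (hgx : IsSubgradient mu f x gx) (hgy : IsSubgradient mu f y gy) :
    ⟪gx - gy, x - y⟫ ≥
      (1 / L) * ‖gx - gy‖ ^ 2 +
      mu / (L * (L - mu)) * ‖gx - gy - L • (x - y)‖ ^ 2 :=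
  curvature_cocoercivity_general L mu hL hmuL f hup x y gx gy hgx hgy
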